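/- Let σ = [p₀,…,p_k] be a non-degenerate k-simplex in ℝ^m and P the m × k matrix with columns pᵢ − p₀. If there is a vertex pᵢ with i ≠ 0 whose altitude D(pᵢ,σ) is minimal among all altitudes of σ, then the smallest singular value satisfies s_k(P) ≤ k · t(σ) · L(σ). -/

import Mathlib

open Matrix Metric
open scoped Classical BigOperators

noncomputable section

/-- Euclidean space ℝ^m. -/
abbrev E (m : ℕ) := EuclideanSpace ℝ (Fin m)

/-- Euclidean norm of a plain vector. -/
noncomputable def euclNorm {n : ℕ} (v : Fin n → ℝ) : ℝ := Real.sqrt (∑ i, v i ^ 2)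

/-- Largest singular value (operator norm) of a matrix. -/
noncomputable def largeSV {m k : ℕ} (P : Matrix (Fin m) (Fin k) ℝ) : ℝ :=
  ⨆ x : {x : Fin k → ℝ // euclNorm x = 1}, euclNorm (P.mulVec x)

/-- Smallest singular value of a matrix. -/
noncomputable def smallSV {m k : ℕ} (P : Matrix (Fin m) (Fin k) ℝ) : ℝ :=
  ⨅ x : {x : Fin k → ℝ // euclNorm x = 1}, euclNorm (P.mulVec x)

/-- Matrix of edge vectors pᵢ − p₀ of a k-simplex. -/
noncomputable def vertMatrix {m k : ℕ} (p : Fin (k+1) → E m) : Matrix (Fin m) (Fin k) ℝ :=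
  fun a j => p j.succ a - p 0 a

/-- Pseudo-inverse (PᵀP)⁻¹Pᵀ of a matrix of full column rank. -/
noncomputable def pseudoInv {m k : ℕ} (P : Matrix (Fin m) (Fin k) ℝ) :
    Matrix (Fin k) (Fin m) ℝ := (Pᵀ * P)⁻¹ * Pᵀ

/-- Longest edge length of a simplex given by its vertices. -/
noncomputable def longEdge {m k : ℕ} (p : Fin (k+1) → E m) : ℝ :=
  ⨆ i, ⨆ j, dist (p i) (p j)

/-- Altitude of vertex i: distance to affine hull of the opposite facet. -/
noncomputable def altitude {m k : ℕ} (p : Fin (k+1) → E m) (i : Fin (k+1)) : ℝ :=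
  Metric.infDist (p i) (↑(affineSpan ℝ (p '' {j | j ≠ i})) : Set (E m))

/-- Thickness of a k-simplex: 1 if k = 0, else min altitude / (k · longest edge). -/
noncomputable def thickness {m k : ℕ} (p : Fin (k+1) → E m) : ℝ :=
  if k = 0 then 1 else (⨅ i, altitude p i) / (k * longEdge p)

/-- Longest edge of a finite vertex set. -/
noncomputable def fLongEdge {m : ℕ} (s : Finset (E m)) : ℝ := Metric.diam (s : Set (E m))

/-- Minimal altitude of a finite vertex set. -/
noncomputable def fMinAlt {m : ℕ} (s : Finset (E m)) : ℝ :=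
  ⨅ p : {p // p ∈ s},
    Metric.infDist (p : E m) (↑(affineSpan ℝ ((s.erase (p : E m)) : Set (E m))) : Set (E m))

/-- Thickness of a simplex given as a finite vertex set. -/
noncomputable def fThickness {m : ℕ} (s : Finset (E m)) : ℝ :=
  if s.card ≤ 1 then 1 else fMinAlt s / ((s.card - 1 : ℕ) * fLongEdge s)

/-- A simplex (finite vertex set) is Γ₀-good if every j-face has thickness ≥ Γ₀^j. -/
def isGood {m : ℕ} (Γ₀ : ℝ) (s : Finset (E m)) : Prop :=
  ∀ t ⊆ s, t.Nonempty → fThickness t ≥ Γ₀ ^ (t.card - 1)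

/-- A Γ₀-flake: not Γ₀-good, but every facet is Γ₀-good. -/
def isFlake {m : ℕ} (Γ₀ : ℝ) (s : Finset (E m)) : Prop :=
  ¬ isGood Γ₀ s ∧ ∀ p ∈ s, isGood Γ₀ (s.erase p)

/-!
Let `q` be a point of the affine hull of the facet opposite `pᵢ`, `i ≠ 0`. Since `p₀` lies on that
facet, `q - p₀` is a combination of the columns of `P` other than the `i`-th, so `pᵢ - q = P x` for
a vector `x` whose `i`-th entry is `1`. Then `‖x‖ ≥ 1` and `s_k(P) ≤ ‖P x‖ / ‖x‖ ≤ ‖pᵢ - q‖`;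
minimising over `q` gives `s_k(P) ≤ D(pᵢ, σ)`, which is the minimal altitude `k · t(σ) · L(σ)`.
-/

section SingularValues

variable {m n : ℕ}

lemma euclNorm_eq_norm (v : Fin n → ℝ) : euclNorm v = ‖WithLp.toLp 2 v‖ := by
  simp [euclNorm, EuclideanSpace.norm_eq]

lemma euclNorm_nonneg (v : Fin n → ℝ) : 0 ≤ euclNorm v := Real.sqrt_nonneg _

lemma euclNorm_smul (c : ℝ) (v : Fin n → ℝ) : euclNorm (c • v) = |c| * euclNorm v := by
  rw [euclNorm_eq_norm, euclNorm_eq_norm, WithLp.toLp_smul, norm_smul, Real.norm_eq_abs]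

lemma abs_le_euclNorm (v : Fin n → ℝ) (j : Fin n) : |v j| ≤ euclNorm v := by
  rw [euclNorm_eq_norm, ← Real.norm_eq_abs]
  exact PiLp.norm_apply_le (WithLp.toLp 2 v) j

lemma smallSV_nonneg (P : Matrix (Fin m) (Fin n) ℝ) : 0 ≤ smallSV P :=
  Real.iInf_nonneg fun _ => euclNorm_nonneg _

lemma smallSV_mul_euclNorm_le (P : Matrix (Fin m) (Fin n) ℝ) (x : Fin n → ℝ) :
    smallSV P * euclNorm x ≤ euclNorm (P *ᵥ x) := by
  rcases (euclNorm_nonneg x).eq_or_lt with hx | hx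
  · rw [← hx, mul_zero]
    exact euclNorm_nonneg _
  have hc : 0 < (euclNorm x)⁻¹ := inv_pos.2 hx
  have hunit : euclNorm ((euclNorm x)⁻¹ • x) = 1 := by
    rw [euclNorm_smul, abs_of_pos hc, inv_mul_cancel₀ hx.ne']
  have hbdd : BddBelow (Set.range fun y : {y : Fin n → ℝ // euclNorm y = 1} => euclNorm (P *ᵥ y)) :=
    ⟨0, by rintro _ ⟨y, rfl⟩; exact euclNorm_nonneg _⟩
  have hle : smallSV P ≤ euclNorm (P *ᵥ ((euclNorm x)⁻¹ • x)) := ciInf_le hbdd ⟨_, hunit⟩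
  rwa [mulVec_smul, euclNorm_smul, abs_of_pos hc, inv_mul_eq_div, le_div_iff₀ hx] at hle

end SingularValues

section Simplex

variable {m k : ℕ} (p : Fin (k+1) → E m)

lemma altitude_nonneg (i : Fin (k+1)) : 0 ≤ altitude p i := infDist_nonneg

lemma altitude_le_dist {i j : Fin (k+1)} (hji : j ≠ i) : altitude p i ≤ dist (p i) (p j) :=
  infDist_le_dist_of_mem (subset_affineSpan ℝ _ ⟨j, hji, rfl⟩)

lemma dist_le_longEdge (i j : Fin (k+1)) : dist (p i) (p j) ≤ longEdge p :=
  (le_ciSup (f := fun j => dist (p i) (p j)) (Finite.bddAbove_range _) j).trans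
    (le_ciSup (f := fun i => ⨆ j, dist (p i) (p j)) (Finite.bddAbove_range _) i)

lemma mul_thickness_mul_longEdge (hk : k ≠ 0) :
    k * thickness p * longEdge p = ⨅ j, altitude p j := by
  rw [thickness, if_neg hk]
  rcases (dist_nonneg.trans (dist_le_longEdge p 0 0)).eq_or_lt with hL | hL
  -- `L = 0` makes the division junk, but then every altitude vanishes as well.
  · have hinf : ⨅ j, altitude p j ≤ 0 := by
      let j : Fin (k+1) := Fin.succ ⟨0, Nat.pos_of_ne_zero hk⟩
      calc ⨅ j, altitude p j ≤ altitude p 0 := ciInf_le (Finite.bddBelow_range _) 0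
        _ ≤ dist (p 0) (p j) := altitude_le_dist p (Fin.succ_ne_zero _)
        _ ≤ 0 := hL ▸ dist_le_longEdge p _ _
    rw [← hL, mul_zero, le_antisymm hinf (Real.iInf_nonneg (altitude_nonneg p))]
  · field_simp

lemma toLp_vertMatrix_mulVec_single (l : Fin k) :
    WithLp.toLp 2 (vertMatrix p *ᵥ Pi.single l 1) = p l.succ - p 0 := by
  ext a
  simp [vertMatrix]

lemma exists_mulVec_eq_of_mem_vectorSpan {i : Fin (k+1)} (hi : i ≠ 0) {v : E m}
    (hv : v ∈ vectorSpan ℝ (p '' {j | j ≠ i})) :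
    ∃ y : Fin k → ℝ, y (i.pred hi) = 0 ∧ WithLp.toLp 2 (vertMatrix p *ᵥ y) = v := by
  let L : (Fin k → ℝ) →ₗ[ℝ] E m :=
    (WithLp.linearEquiv 2 ℝ (Fin m → ℝ)).symm.toLinearMap ∘ₗ (vertMatrix p).mulVecLin
  suffices vectorSpan ℝ (p '' {j | j ≠ i}) ≤ (LinearMap.ker (LinearMap.proj (i.pred hi))).map L by
    obtain ⟨y, hy, rfl⟩ := this hv
    exact ⟨y, hy, rfl⟩
  rw [vectorSpan_eq_span_vsub_set_right ℝ (show p 0 ∈ p '' {j | j ≠ i} from ⟨0, hi.symm, rfl⟩),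
    Submodule.span_le]
  rintro _ ⟨_, ⟨j, hj, rfl⟩, rfl⟩
  cases j using Fin.cases with
  | zero => simpa only [vsub_self, SetLike.mem_coe] using Submodule.zero_mem _
  | succ l =>
    refine ⟨Pi.single l 1, Pi.single_eq_of_ne (fun h => hj ?_) _, toLp_vertMatrix_mulVec_single p l⟩
    rw [← h, Fin.succ_pred]

lemma exists_mulVec_eq_sub_of_mem_affineSpan {i : Fin (k+1)} (hi : i ≠ 0) {q : E m}
    (hq : q ∈ affineSpan ℝ (p '' {j | j ≠ i})) :
    ∃ x : Fin k → ℝ, x (i.pred hi) = 1 ∧ WithLp.toLp 2 (vertMatrix p *ᵥ x) = p i - q := by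
  have h0 : p 0 ∈ affineSpan ℝ (p '' {j | j ≠ i}) := subset_affineSpan ℝ _ ⟨0, hi.symm, rfl⟩
  obtain ⟨y, hy, hPy⟩ := exists_mulVec_eq_of_mem_vectorSpan p hi
    (by rw [← direction_affineSpan]; exact AffineSubspace.vsub_mem_direction hq h0)
  refine ⟨Pi.single (i.pred hi) 1 - y, by simp [hy], ?_⟩
  rw [mulVec_sub, WithLp.toLp_sub, hPy, toLp_vertMatrix_mulVec_single, Fin.succ_pred, vsub_eq_sub]
  abel

theorem smallSV_vertMatrix_le_altitude {i : Fin (k+1)} (hi : i ≠ 0) :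
    smallSV (vertMatrix p) ≤ altitude p i := by
  have h0 : p 0 ∈ affineSpan ℝ (p '' {j | j ≠ i}) := subset_affineSpan ℝ _ ⟨0, hi.symm, rfl⟩
  refine (le_infDist ⟨p 0, h0⟩).2 fun q hq => ?_
  obtain ⟨x, hx1, hPx⟩ := exists_mulVec_eq_sub_of_mem_affineSpan p hi hq
  have hx : 1 ≤ euclNorm x := by simpa [hx1] using abs_le_euclNorm x (i.pred hi)
  calc smallSV (vertMatrix p) ≤ smallSV (vertMatrix p) * euclNorm x :=
        le_mul_of_one_le_right (smallSV_nonneg _) hx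
    _ ≤ euclNorm (vertMatrix p *ᵥ x) := smallSV_mul_euclNorm_le _ _
    _ = dist (p i) q := by rw [euclNorm_eq_norm, hPx, dist_eq_norm]

end Simplex

theorem stmt1_general {m k : ℕ} (p : Fin (k+1) → E m)
    (i : Fin (k+1)) (hi : i ≠ 0) (hmin : ∀ j, altitude p i ≤ altitude p j) :
    smallSV (vertMatrix p) ≤ k * thickness p * longEdge p := by
  have hk : k ≠ 0 := by
    rintro rfl
    exact hi (Fin.fin_one_eq_zero i)
  rw [mul_thickness_mul_longEdge p hk]
  exact (smallSV_vertMatrix_le_altitude p hi).trans (le_ciInf hmin)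

/-- Upper bound on the smallest singular value when a vertex other than p₀
realises the minimal altitude. -/
theorem stmt1 {m k : ℕ} (hk : 0 < k) (p : Fin (k+1) → E m)
    (hnd : 0 < thickness p)
    (i : Fin (k+1)) (hi : i ≠ 0) (hmin : ∀ j, altitude p i ≤ altitude p j) :
    smallSV (vertMatrix p) ≤ k * thickness p * longEdge p :=
  stmt1_general p i hi hmin
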